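/- Let P ⊆ ℤⁿ be a subgroup (the group of periodic domains, recorded by multiplicities on the n interior regions) such that every nonzero element of P has both a positive and a negative coordinate. Then there exists a vector a ∈ ℤⁿ with all coordinates positive such that ⟨a, p⟩ = 0 for all p ∈ P. -/

import Mathlib

/-!
Farkas's lemma holds over any linearly ordered commutative ring once a positive multiplier is
allowed: if `a₁ x, …, aₘ x ≥ 0` forces `b x ≥ 0`, then `c • b = ∑ lᵢ • aᵢ` with `c > 0` and all
`lᵢ ≥ 0`. By induction on `m` (after Bartl): either `a₀` is redundant, or some `z` satisfies the
other inequalities with `b z < 0`, so `a₀ z < 0`, and the substitution `x ↦ a₀ z • x - a₀ x • z`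
into `ker a₀` eliminates `a₀`. Only ring operations occur, so the argument runs over `ℤ`.

Over `ℤ`, on the module `P`, take the coordinates as the `aᵢ` and `b p = -∑ pᵢ`: the hypothesis
holds because a coordinatewise nonnegative element of `P` is zero. The result
`c * (-∑ pᵢ) = ∑ lᵢ pᵢ` says that the areas `c + lᵢ > 0` pair to zero with every `p ∈ P`.
-/

open Finset

namespace LinearMap

variable {R M : Type*} [CommRing R] [LinearOrder R] [AddCommGroup M] [Module R M]

theorem nonneg_smul_sub_smul_of_nonneg {m : ℕ} {α b : M →ₗ[R] R} {a : Fin m → M →ₗ[R] R}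
    (h : ∀ x, 0 ≤ α x → (∀ i, 0 ≤ a i x) → 0 ≤ b x) (z x : M)
    (hx : ∀ i, 0 ≤ (α z • a i - a i z • α) x) : 0 ≤ (α z • b - b z • α) x := by
  have hsubst : ∀ f : M →ₗ[R] R, f (α z • x - α x • z) = (α z • f - f z • α) x := fun f => by
    simp only [map_sub, map_smul, smul_eq_mul, sub_apply, smul_apply]
    ring
  rw [← hsubst]
  refine h _ (by rw [hsubst]; simp) fun i => ?_
  rw [hsubst]
  exact hx i

variable [IsStrictOrderedRing R]

theorem eq_zero_of_forall_nonneg {b : M →ₗ[R] R} (hb : ∀ x, 0 ≤ b x) : b = 0 := by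
  ext x
  exact le_antisymm (by simpa using hb (-x)) (hb x)

theorem exists_pos_mul_eq_sum_nonneg_mul {m : ℕ} (a : Fin m → M →ₗ[R] R) (b : M →ₗ[R] R)
    (h : ∀ x, (∀ i, 0 ≤ a i x) → 0 ≤ b x) :
    ∃ c : R, 0 < c ∧ ∃ l : Fin m → R, (∀ i, 0 ≤ l i) ∧ ∀ x, c * b x = ∑ i, l i * a i x := by
  induction m generalizing b with
  | zero =>
    refine ⟨1, one_pos, 0, fun _ => le_rfl, fun x => ?_⟩
    simp [eq_zero_of_forall_nonneg fun x => h x finZeroElim]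
  | succ m ih =>
    by_cases hredundant : ∀ x, (∀ i : Fin m, 0 ≤ a i.succ x) → 0 ≤ b x
    · obtain ⟨c, hc, l, hl, hcl⟩ := ih (fun i => a i.succ) b hredundant
      refine ⟨c, hc, Fin.cons 0 l, fun i => Fin.cases le_rfl hl i, fun x => ?_⟩
      simp [Fin.sum_univ_succ, hcl x]
    obtain ⟨z, hza, hzb⟩ : ∃ z, (∀ i : Fin m, 0 ≤ a i.succ z) ∧ b z < 0 := by
      simpa using hredundant
    have hαz : a 0 z < 0 := by
      by_contra! hαz
      exact hzb.not_ge (h z (Fin.cases hαz hza))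
    obtain ⟨c, hc, l, hl, hcl⟩ := ih (fun i => a 0 z • a i.succ - a i.succ z • a 0)
      (a 0 z • b - b z • a 0)
      (nonneg_smul_sub_smul_of_nonneg (fun x hα ha => h x (Fin.cases hα ha)) z)
    refine ⟨c * -a 0 z, mul_pos hc (neg_pos.2 hαz),
      Fin.cons (∑ i, l i * a i.succ z - c * b z) fun i => l i * -a 0 z, fun i => ?_, fun x => ?_⟩
    · refine Fin.cases ?_ (fun i => mul_nonneg (hl i) (neg_nonneg.2 hαz.le)) i
      have : 0 ≤ ∑ i, l i * a i.succ z := sum_nonneg fun i _ => mul_nonneg (hl i) (hza i)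
      simp only [Fin.cons_zero]
      nlinarith
    · have hx := hcl x
      simp only [sub_apply, smul_apply, smul_eq_mul, mul_sub, sum_sub_distrib] at hx
      have hs₁ : ∑ i, l i * (a 0 z * a i.succ x) = a 0 z * ∑ i, l i * a i.succ x := by
        rw [mul_sum]; exact sum_congr rfl fun i _ => by ring
      have hs₂ : ∑ i, l i * (a i.succ z * a 0 x) = (∑ i, l i * a i.succ z) * a 0 x := by
        rw [sum_mul]; exact sum_congr rfl fun i _ => by ring
      have hs₃ : ∑ i, l i * -a 0 z * a i.succ x = -(a 0 z * ∑ i, l i * a i.succ x) := by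
        rw [mul_sum, ← sum_neg_distrib]; exact sum_congr rfl fun i _ => by ring
      simp only [Fin.sum_univ_succ, Fin.cons_zero, Fin.cons_succ, hs₃]
      linear_combination -hx - hs₁ + hs₂

end LinearMap

/-- Integer area assignment: if every nonzero element of a subgroup
`P ⊆ ℤⁿ` has both a positive and a negative coordinate, then there is a
vector with all positive integer coordinates orthogonal to all of `P`. -/
theorem exists_positive_integer_area
    (n : ℕ) (P : AddSubgroup (Fin n → ℤ))
    (hP : ∀ p ∈ P, p ≠ 0 → (∃ i, 0 < p i) ∧ (∃ j, p j < 0)) :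
    ∃ a : Fin n → ℤ, (∀ i, 0 < a i) ∧ ∀ p ∈ P, ∑ i, a i * p i = 0 := by
  let coord (i : Fin n) : P.toIntSubmodule →ₗ[ℤ] ℤ :=
    (LinearMap.proj i).comp P.toIntSubmodule.subtype
  have hsum_nonpos : ∀ p ∈ P, (∀ i, 0 ≤ p i) → ∑ i, p i ≤ 0 := by
    intro p hp hnonneg
    obtain rfl : p = 0 := by
      by_contra hne
      obtain ⟨j, hj⟩ := (hP p hp hne).2
      exact (hnonneg j).not_gt hj
    simp
  obtain ⟨c, hc, l, hl, hcl⟩ := LinearMap.exists_pos_mul_eq_sum_nonneg_mul coord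
    (-∑ i, coord i) fun p hp => by simpa [coord] using hsum_nonpos p p.2 hp
  refine ⟨fun i => c + l i, fun i => add_pos_of_pos_of_nonneg hc (hl i), fun p hp => ?_⟩
  have hcp := hcl ⟨p, hp⟩
  simp only [LinearMap.neg_apply, LinearMap.coe_sum, LinearMap.coe_comp, LinearMap.coe_proj,
    Submodule.coe_subtype, Finset.sum_apply, Function.comp_apply, Function.eval, mul_neg, coord] at hcp
  simp only [add_mul, sum_add_distrib, ← mul_sum]
  linarith
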